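/- Let U ⊆ ℂ be open, f, g : ℂ → ℂ differentiable on U, and let κ, α ∈ ℂ and ε ∈ {1, −1}. Suppose that for all z ∈ U: g(z) ≠ 0, g(z)^2 = f(z)^2 − α*f(z), and f'(z) = ε*κ*g(z). Then the function u := 2*f − α + 2*ε*g satisfies u'(z) = κ*u(z) for all z ∈ U. -/

import Mathlib

/-!
Differentiating `g ^ 2 = f ^ 2 - α f` gives `2 g g' = (2 f - α) f' = ε κ (2 f - α) g`, and since
`g ≠ 0` this means `2 ε g' = κ (2 f - α)` (using `ε ^ 2 = 1`). Hence the two halves of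
`u = (2 f - α) + 2 ε g` are exchanged by differentiation up to the factor `κ`:
`(2 f - α)' = κ (2 ε g)` and `(2 ε g)' = κ (2 f - α)`, so `u' = κ u`.
-/

open Filter Topology

variable {𝕜 : Type*} [NontriviallyNormedField 𝕜] {f g : 𝕜 → 𝕜} {f' g' α κ ε z : 𝕜}

theorem two_mul_mul_hasDerivAt_eq_of_sq_eventuallyEq (hf : HasDerivAt f f' z)
    (hg : HasDerivAt g g' z) (hsq : (fun w => g w ^ 2) =ᶠ[𝓝 z] fun w => f w ^ 2 - α * f w) :
    2 * g z * g' = (2 * f z - α) * f' := by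
  have hg2 : HasDerivAt (fun w => g w ^ 2) (2 * g z * g') z := by
    simpa using hg.fun_pow 2
  have hf2 : HasDerivAt (fun w => f w ^ 2 - α * f w) ((2 * f z - α) * f') z := by
    refine ((hf.fun_pow 2).sub (hf.const_mul α)).congr_deriv ?_
    push_cast
    ring
  exact hg2.unique (hf2.congr_of_eventuallyEq hsq)

theorem hasDerivAt_two_mul_sub_add_two_mul_of_sq_eventuallyEq (hf : HasDerivAt f (ε * κ * g z) z)
    (hg : DifferentiableAt 𝕜 g z) (hg0 : g z ≠ 0)
    (hsq : (fun w => g w ^ 2) =ᶠ[𝓝 z] fun w => f w ^ 2 - α * f w) (hε : ε ^ 2 = 1) :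
    HasDerivAt (fun w => 2 * f w - α + 2 * ε * g w) (κ * (2 * f z - α + 2 * ε * g z)) z := by
  have hg' : 2 * deriv g z = ε * κ * (2 * f z - α) := by
    have h := two_mul_mul_hasDerivAt_eq_of_sq_eventuallyEq hf hg.hasDerivAt hsq
    apply mul_left_cancel₀ hg0
    linear_combination h
  refine (((hf.const_mul 2).sub_const α).add (hg.hasDerivAt.const_mul (2 * ε))).congr_deriv ?_
  linear_combination ε * hg' + κ * (2 * f z - α) * hε

theorem stmt_13 (U : Set ℂ) (hU : IsOpen U) (f g : ℂ → ℂ)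
    (hf : DifferentiableOn ℂ f U) (hg : DifferentiableOn ℂ g U)
    (κ α ε : ℂ) (hε : ε = 1 ∨ ε = -1)
    (hg0 : ∀ z ∈ U, g z ≠ 0)
    (hsq : ∀ z ∈ U, (g z) ^ 2 = (f z) ^ 2 - α * f z)
    (hf' : ∀ z ∈ U, deriv f z = ε * κ * g z) :
    ∀ z ∈ U, deriv (fun w => 2 * f w - α + 2 * ε * g w) z =
      κ * (2 * f z - α + 2 * ε * g z) := by
  intro z hz
  have hUz : U ∈ 𝓝 z := hU.mem_nhds hz
  have hfz : HasDerivAt f (ε * κ * g z) z :=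
    hf' z hz ▸ ((hf z hz).differentiableAt hUz).hasDerivAt
  have hε2 : ε ^ 2 = 1 := by rcases hε with rfl | rfl <;> norm_num
  exact (hasDerivAt_two_mul_sub_add_two_mul_of_sq_eventuallyEq hfz
    ((hg z hz).differentiableAt hUz) (hg0 z hz) (eventually_of_mem hUz hsq) hε2).deriv
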